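/- If G is a connected median graph that is (s,s−1)-dismantlable for an integer s ≥ 1, then G is 2s-hyperbolic. -/

import Mathlib

/-!
In a median graph the four-point defect of `a, b, x, y` is bounded by the distance `2K` between
two points `c, e` of the interval `I(a, b)` at equal distance from `a`. Their median `m` with `a`
lies midway between them, and the geodesics from `m` to `c` and to `e` span an isometric grid
of side `K`, filled in square by square by the quadrangle condition (medians towards `b`).
In an `(s, s - 1)`-dismantlable graph there is no isometric grid of side `2s`: the last grid
vertex `z` in the dismantling order is the centre of an `L`-shaped geodesic of length `2s` in
the grid, and the vertex eliminating `z` would be closer than `s` to both of its ends.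
Hence `K < 2s`, so the defect is below `4s`.
-/

open SimpleGraph

variable {V : Type*}

/-- The ball of (real) radius `r` around `v` in `G` (w.r.t. the graph distance). -/
def gBall (G : SimpleGraph V) (v : V) (r : ℝ) : Set V :=
  {x : V | (G.dist v x : ℝ) ≤ r}

/-- The interval `I(u,v)`: vertices lying on shortest `(u,v)`-paths. -/
def gInterval (G : SimpleGraph V) (u v : V) : Set V :=
  {x : V | G.dist u x + G.dist x v = G.dist u v}

/-- Gromov `δ`-hyperbolicity via the four-point condition. -/
def IsHyperbolic {W : Type*} (G : SimpleGraph W) (δ : ℝ) : Prop :=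
  ∀ u v x y : W,
    (G.dist u v : ℝ) + (G.dist x y : ℝ) ≤
      max ((G.dist u x : ℝ) + (G.dist v y : ℝ)) ((G.dist u y : ℝ) + (G.dist v x : ℝ)) + 2 * δ

/-- `(s,s')*`-dismantlability: there is a well-order `lt` on the vertices such that every
vertex `v` which is not the least element is eliminated by some earlier vertex `u`,
i.e. `B_s(v) ∩ X_v ⊆ B_{s'}(u)` where `X_v = {w : w ⪯ v}`. -/
def StarDismantlable (G : SimpleGraph V) (s s' : ℝ) : Prop :=
  ∃ lt : V → V → Prop, IsWellOrder V lt ∧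
    ∀ v : V, (∃ w : V, lt w v) →
      ∃ u : V, lt u v ∧ gBall G v s ∩ {w : V | lt w v ∨ w = v} ⊆ gBall G u s'

/-- The ball of radius `r` around `v` in the subgraph of `G` induced on `V \ {u}`. -/
def gBallRemove (G : SimpleGraph V) (u v : V) (r : ℝ) : Set V :=
  {x : V | ∃ (hv : v ∈ {w : V | w ≠ u}) (hx : x ∈ {w : V | w ≠ u}),
    (G.induce {w : V | w ≠ u}).Reachable ⟨v, hv⟩ ⟨x, hx⟩ ∧
    ((G.induce {w : V | w ≠ u}).dist ⟨v, hv⟩ ⟨x, hx⟩ : ℝ) ≤ r}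

/-- `(s,s')`-dismantlability: there is a well-order `lt` on the vertices such that every
vertex `v` which is not the least element is eliminated by an earlier vertex `u`, i.e.
`B_s(v, G−u) ∩ X_v ⊆ B_{s'}(u)`. -/
def Dismantlable (G : SimpleGraph V) (s s' : ℝ) : Prop :=
  ∃ lt : V → V → Prop, IsWellOrder V lt ∧
    ∀ v : V, (∃ w : V, lt w v) →
      ∃ u : V, lt u v ∧ gBallRemove G u v s ∩ {w : V | lt w v ∨ w = v} ⊆ gBall G u s'

/-- Weak modularity: the triangle and quadrangle conditions. -/
def WeaklyModular (G : SimpleGraph V) : Prop :=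
  (∀ u v w : V, G.dist v w = 1 → 1 < G.dist u v → G.dist u v = G.dist u w →
    ∃ x : V, G.Adj v x ∧ G.Adj w x ∧ G.dist u x + 1 = G.dist u v) ∧
  (∀ u v w z : V, G.dist v z = 1 → G.dist w z = 1 → G.dist v w = 2 →
    2 ≤ G.dist u v → G.dist u v = G.dist u w → G.dist u z = G.dist u v + 1 →
    ∃ x : V, G.Adj v x ∧ G.Adj w x ∧ G.dist u x + 1 = G.dist u v)

/-- `u`, `v`, `w` form a metric triangle: the pairwise intervals intersect only in the
common end-vertices. -/
def MetricTriangle (G : SimpleGraph V) (u v w : V) : Prop :=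
  gInterval G u v ∩ gInterval G v w = {v} ∧
  gInterval G v w ∩ gInterval G w u = {w} ∧
  gInterval G w u ∩ gInterval G u v = {u}

/-- A median graph: any three vertices have a unique median. -/
def MedianGraph (G : SimpleGraph V) : Prop :=
  ∀ u v w : V, ∃! m : V,
    m ∈ gInterval G u v ∩ gInterval G u w ∩ gInterval G v w

lemma mem_gInterval {G : SimpleGraph V} {u v x : V} :
    x ∈ gInterval G u v ↔ G.dist u x + G.dist x v = G.dist u v := Iff.rfl

lemma mem_gInterval_comm {G : SimpleGraph V} {u v x : V} :
    x ∈ gInterval G u v ↔ x ∈ gInterval G v u := by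
  simp only [mem_gInterval, G.dist_comm (u := u), G.dist_comm (v := v), add_comm]

namespace SimpleGraph

variable {G : SimpleGraph V}

lemma Connected.gInterval_subset (hG : G.Connected) {u v w : V} (hv : v ∈ gInterval G u w) :
    gInterval G u v ⊆ gInterval G u w := by
  intro x hx
  rw [mem_gInterval] at *
  have := hG.dist_triangle (u := u) (v := x) (w := w)
  have := hG.dist_triangle (u := x) (v := v) (w := w)
  omega

lemma Connected.mem_gInterval_of_mem_gInterval (hG : G.Connected) {u v w x : V}
    (hv : v ∈ gInterval G u w) (hx : x ∈ gInterval G u v) : v ∈ gInterval G x w := by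
  rw [mem_gInterval] at *
  have := hG.dist_triangle (u := u) (v := x) (w := w)
  have := hG.dist_triangle (u := x) (v := v) (w := w)
  omega

namespace Walk

variable {u v : V} {p : G.Walk u v}

lemma mem_gInterval_of_mem_support (hp : p.length = G.dist u v) {w : V} (hw : w ∈ p.support) :
    w ∈ gInterval G u v := by
  classical
  have htake := length_eq_dist_of_subwalk hp (p.isSubwalk_takeUntil hw)
  have hdrop := length_eq_dist_of_subwalk hp (p.isSubwalk_dropUntil hw)
  have hlen := congrArg length (p.take_spec hw)
  rw [length_append] at hlen
  rw [mem_gInterval]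
  omega

lemma dist_getVert (hp : p.length = G.dist u v) {i : ℕ} (hi : i ≤ p.length) :
    G.dist u (p.getVert i) = i := by
  rw [← length_eq_dist_of_subwalk hp (p.isSubwalk_take i), take_length]
  omega

end Walk

lemma Connected.exists_mem_gInterval_dist_eq (hG : G.Connected) {u v : V} {t : ℕ}
    (ht : t ≤ G.dist u v) : ∃ w ∈ gInterval G u v, G.dist u w = t := by
  obtain ⟨p, hp⟩ := hG.exists_walk_length_eq_dist u v
  exact ⟨p.getVert t, p.mem_gInterval_of_mem_support hp (p.getVert_mem_support t),
    p.dist_getVert hp (hp ▸ ht)⟩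

end SimpleGraph

section Grid

variable {G : SimpleGraph V}

def IsIsometricGrid (G : SimpleGraph V) (N : ℕ) (g : ℕ → ℕ → V) : Prop :=
  ∀ i j k l, i ≤ N → j ≤ N → k ≤ N → l ≤ N →
    G.dist (g i j) (g k l) = Nat.dist i k + Nat.dist j l

lemma dist_le_natDist_of_adj_succ (hG : G.Connected) {f : ℕ → V} {N : ℕ}
    (hf : ∀ t < N, G.Adj (f t) (f (t + 1))) {a b : ℕ} (ha : a ≤ N) (hb : b ≤ N) :
    G.dist (f a) (f b) ≤ Nat.dist a b := by
  wlog hab : a ≤ b generalizing a b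
  · rw [G.dist_comm, Nat.dist_comm]
    exact this hb ha (by omega)
  induction b, hab using Nat.le_induction with
  | base => simp
  | succ b hab ih =>
    have hstep := dist_eq_one_iff_adj.mpr (hf b (by omega))
    have := hG.dist_triangle (u := f a) (v := f b) (w := f (b + 1))
    have := ih (by omega)
    simp only [Nat.dist] at *
    omega

/-- The potentials `d(b, ·)` and `d(c, ·)` separate grid points by their `ℓ¹` distance. -/
lemma isIsometricGrid_of_potentials (hG : G.Connected) {g : ℕ → ℕ → V} {b c : V}
    {N C K : ℕ} (hb : ∀ i ≤ N, ∀ j ≤ N, G.dist b (g i j) + (i + j) = C)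
    (hc : ∀ i ≤ N, ∀ j ≤ N, G.dist c (g i j) + i = K + j)
    (hrow : ∀ i < N, ∀ j ≤ N, G.Adj (g i j) (g (i + 1) j))
    (hcol : ∀ i ≤ N, ∀ j < N, G.Adj (g i j) (g i (j + 1))) :
    IsIsometricGrid G N g := by
  intro i j k l hi hj hk hl
  have hrow' := dist_le_natDist_of_adj_succ hG (f := fun i => g i j) (fun t ht => hrow t ht j hj)
    hi hk
  have hcol' := dist_le_natDist_of_adj_succ hG (f := g k) (fun t ht => hcol k hk t ht) hj hl
  have := hG.dist_triangle (u := g i j) (v := g k j) (w := g k l)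
  have := hG.dist_triangle (u := b) (v := g i j) (w := g k l)
  have := hG.dist_triangle (u := b) (v := g k l) (w := g i j)
  have := hG.dist_triangle (u := c) (v := g i j) (w := g k l)
  have := hG.dist_triangle (u := c) (v := g k l) (w := g i j)
  have := G.dist_comm (u := g i j) (v := g k l)
  have := hb i hi j hj
  have := hb k hk l hl
  have := hc i hi j hj
  have := hc k hk l hl
  simp only [Nat.dist] at *
  omega

noncomputable def gridFill (f : V → V → V) (x y : ℕ → V) : ℕ → ℕ → V
  | 0, j => y j
  | i + 1, 0 => x (i + 1)
  | i + 1, j + 1 => f (gridFill f x y (i + 1) j) (gridFill f x y i (j + 1))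
termination_by i j => (i, j)

variable {f : V → V → V} {x y : ℕ → V}

lemma gridFill_zero_left (j : ℕ) : gridFill f x y 0 j = y j := by
  cases j <;> simp [gridFill]

lemma gridFill_zero_right (hxy : x 0 = y 0) (i : ℕ) : gridFill f x y i 0 = x i := by
  cases i <;> simp [gridFill, hxy]

lemma gridFill_succ_succ (i j : ℕ) :
    gridFill f x y (i + 1) (j + 1) = f (gridFill f x y (i + 1) j) (gridFill f x y i (j + 1)) := by
  simp [gridFill]

lemma gridFill_spec {b c : V} {N C K : ℕ}
    (hf : ∀ r p q, G.Adj r p → G.Adj r q → G.dist b p = G.dist b q →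
      G.dist c q = G.dist c p + 2 → G.Adj p (f p q) ∧ G.Adj q (f p q) ∧
        G.dist b (f p q) + 1 = G.dist b p ∧ G.dist c (f p q) = G.dist c p + 1)
    (hxy : x 0 = y 0) (hx : ∀ i < N, G.Adj (x i) (x (i + 1)))
    (hy : ∀ j < N, G.Adj (y j) (y (j + 1)))
    (hbx : ∀ i ≤ N, G.dist b (x i) + i = C) (hby : ∀ j ≤ N, G.dist b (y j) + j = C)
    (hcx : ∀ i ≤ N, G.dist c (x i) + i = K) (hcy : ∀ j ≤ N, G.dist c (y j) = K + j) :
    ∀ i ≤ N, ∀ j ≤ N,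
      (G.dist b (gridFill f x y i j) + (i + j) = C ∧
        G.dist c (gridFill f x y i j) + i = K + j) ∧
      (∀ i', i = i' + 1 → G.Adj (gridFill f x y i' j) (gridFill f x y i j)) ∧
      (∀ j', j = j' + 1 → G.Adj (gridFill f x y i j') (gridFill f x y i j)) := by
  intro i
  induction i with
  | zero =>
    intro _ j hj
    simp only [gridFill_zero_left]
    refine ⟨⟨by simpa using hby j hj, by simpa using hcy j hj⟩, by omega, ?_⟩
    rintro j' rfl
    exact hy j' (by omega)
  | succ i ihi =>
    intro hi j
    induction j with
    | zero =>
      intro _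
      simp only [gridFill_zero_right hxy]
      refine ⟨⟨by simpa using hbx (i + 1) hi, by simpa using hcx (i + 1) hi⟩, ?_, by omega⟩
      rintro i' hi'
      obtain rfl : i = i' := by omega
      exact hx i (by omega)
    | succ j ihj =>
      intro hj
      obtain ⟨⟨hbp, hcp⟩, hrp, -⟩ := ihj (by omega)
      obtain ⟨⟨hbq, hcq⟩, -, hrq⟩ := ihi (by omega) (j + 1) hj
      obtain ⟨hpt, hqt, hbt, hct⟩ := hf _ _ _ (hrp i rfl) (hrq j rfl) (by omega) (by omega)
      rw [gridFill_succ_succ]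
      refine ⟨⟨by omega, by omega⟩, ?_, ?_⟩
      · rintro i' hi'
        obtain rfl : i = i' := by omega
        exact hqt
      · rintro j' hj'
        obtain rfl : j = j' := by omega
        exact hpt

lemma isIsometricGrid_gridFill (hG : G.Connected) {b c : V} {N C K : ℕ}
    (hf : ∀ r p q, G.Adj r p → G.Adj r q → G.dist b p = G.dist b q →
      G.dist c q = G.dist c p + 2 → G.Adj p (f p q) ∧ G.Adj q (f p q) ∧
        G.dist b (f p q) + 1 = G.dist b p ∧ G.dist c (f p q) = G.dist c p + 1)
    (hxy : x 0 = y 0) (hx : ∀ i < N, G.Adj (x i) (x (i + 1)))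
    (hy : ∀ j < N, G.Adj (y j) (y (j + 1)))
    (hbx : ∀ i ≤ N, G.dist b (x i) + i = C) (hby : ∀ j ≤ N, G.dist b (y j) + j = C)
    (hcx : ∀ i ≤ N, G.dist c (x i) + i = K) (hcy : ∀ j ≤ N, G.dist c (y j) = K + j) :
    IsIsometricGrid G N (gridFill f x y) := by
  have key := gridFill_spec hf hxy hx hy hbx hby hcx hcy
  exact isIsometricGrid_of_potentials hG (fun i hi j hj => (key i hi j hj).1.1)
    (fun i hi j hj => (key i hi j hj).1.2)
    (fun i hi j hj => (key (i + 1) hi j hj).2.1 i rfl)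
    (fun i hi j hj => (key i hi (j + 1) hj).2.2 j rfl)

end Grid

namespace MedianGraph

variable {G : SimpleGraph V}

noncomputable def median (hmed : MedianGraph G) (u v w : V) : V :=
  (hmed u v w).exists.choose

lemma median_mem (hmed : MedianGraph G) (u v w : V) :
    hmed.median u v w ∈ gInterval G u v ∩ gInterval G u w ∩ gInterval G v w :=
  (hmed u v w).exists.choose_spec

lemma adj_median_of_dist_eq_two (hmed : MedianGraph G) {b p q : V} (hpq : G.dist p q = 2)
    (hb : G.dist b p = G.dist b q) :
    G.Adj p (hmed.median b p q) ∧ G.Adj q (hmed.median b p q) ∧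
      G.dist b (hmed.median b p q) + 1 = G.dist b p := by
  obtain ⟨⟨hbp, hbq⟩, hpq'⟩ := hmed.median_mem b p q
  rw [mem_gInterval] at hbp hbq hpq'
  have := G.dist_comm (u := p) (v := hmed.median b p q)
  have := G.dist_comm (u := q) (v := hmed.median b p q)
  refine ⟨dist_eq_one_iff_adj.mp ?_, dist_eq_one_iff_adj.mp ?_, ?_⟩ <;> omega

lemma median_completes_square (hmed : MedianGraph G) (hG : G.Connected) {b c r p q : V}
    (hrp : G.Adj r p) (hrq : G.Adj r q) (hb : G.dist b p = G.dist b q)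
    (hc : G.dist c q = G.dist c p + 2) :
    G.Adj p (hmed.median b p q) ∧ G.Adj q (hmed.median b p q) ∧
      G.dist b (hmed.median b p q) + 1 = G.dist b p ∧
      G.dist c (hmed.median b p q) = G.dist c p + 1 := by
  have hpq : G.dist p q = 2 := by
    have := hG.dist_triangle (u := p) (v := r) (w := q)
    have := hG.dist_triangle (u := c) (v := p) (w := q)
    have := dist_eq_one_iff_adj.mpr hrp.symm
    have := dist_eq_one_iff_adj.mpr hrq
    omega
  obtain ⟨hpt, hqt, hbt⟩ := hmed.adj_median_of_dist_eq_two hpq hb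
  have := hpt.diff_dist_adj (u := c)
  have := hqt.diff_dist_adj (u := c)
  exact ⟨hpt, hqt, hbt, by omega⟩

theorem exists_isIsometricGrid (hmed : MedianGraph G) (hG : G.Connected) {b c e m : V} {N : ℕ}
    (hm : m ∈ gInterval G c e) (hc : c ∈ gInterval G m b) (he : e ∈ gInterval G m b)
    (hNc : N ≤ G.dist m c) (hNe : N ≤ G.dist m e) :
    ∃ g, IsIsometricGrid G N g := by
  obtain ⟨p, hp⟩ := hG.exists_walk_length_eq_dist m c
  obtain ⟨q, hq⟩ := hG.exists_walk_length_eq_dist m e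
  have hpb (i : ℕ) : p.getVert i ∈ gInterval G m b :=
    hG.gInterval_subset hc (p.mem_gInterval_of_mem_support hp (p.getVert_mem_support i))
  have hqb (j : ℕ) : q.getVert j ∈ gInterval G m b :=
    hG.gInterval_subset he (q.mem_gInterval_of_mem_support hq (q.getVert_mem_support j))
  have hpc (i : ℕ) : p.getVert i ∈ gInterval G m c :=
    p.mem_gInterval_of_mem_support hp (p.getVert_mem_support i)
  have hqc (j : ℕ) : m ∈ gInterval G (q.getVert j) c :=
    hG.mem_gInterval_of_mem_gInterval (mem_gInterval_comm.mp hm)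
      (mem_gInterval_comm.mp (q.mem_gInterval_of_mem_support hq (q.getVert_mem_support j)))
  refine ⟨_, isIsometricGrid_gridFill hG (f := hmed.median b) (c := c) (x := p.getVert)
    (y := q.getVert) (C := G.dist m b) (K := G.dist m c)
    (fun _ _ _ => hmed.median_completes_square hG) (by simp)
    (fun i hi => p.adj_getVert_succ (by omega)) (fun j hj => q.adj_getVert_succ (by omega))
    (fun i hi => ?_) (fun j hj => ?_) (fun i hi => ?_) (fun j hj => ?_)⟩
  · have := hpb i
    rw [mem_gInterval, p.dist_getVert hp (by omega), G.dist_comm (v := b)] at this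
    omega
  · have := hqb j
    rw [mem_gInterval, q.dist_getVert hq (by omega), G.dist_comm (v := b)] at this
    omega
  · have := hpc i
    rw [mem_gInterval, p.dist_getVert hp (by omega), G.dist_comm (v := c)] at this
    omega
  · have := hqc j
    rw [mem_gInterval, G.dist_comm (u := q.getVert j), q.dist_getVert hq (by omega),
      G.dist_comm (u := q.getVert j)] at this
    omega

theorem dist_lt_of_forall_not_isIsometricGrid (hmed : MedianGraph G) (hG : G.Connected) {N : ℕ}
    (hN : ∀ g, ¬ IsIsometricGrid G N g) {a b c e : V} (hc : c ∈ gInterval G a b)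
    (he : e ∈ gInterval G a b) (hce : G.dist a c = G.dist a e) :
    G.dist c e < 2 * N := by
  obtain ⟨⟨hmc, hme⟩, hm⟩ := hmed.median_mem a c e
  set m := hmed.median a c e
  have hcmb : c ∈ gInterval G m b := hG.mem_gInterval_of_mem_gInterval hc hmc
  have hemb : e ∈ gInterval G m b := hG.mem_gInterval_of_mem_gInterval he hme
  rw [mem_gInterval] at hmc hme hm
  have := G.dist_comm (u := c) (v := m)
  by_contra! hNce
  exact (hmed.exists_isIsometricGrid hG hm hcmb hemb (by omega) (by omega)).elim hN

/-- `c` and `e` are the projections of `x` and `y` onto `I(a, b)`, after moving the one nearer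
to `a` towards `b`. -/
theorem exists_four_point_le (hmed : MedianGraph G) (hG : G.Connected) (a b x y : V) :
    ∃ c ∈ gInterval G a b, ∃ e ∈ gInterval G a b, G.dist a c = G.dist a e ∧
      G.dist a b + G.dist x y ≤
        max (G.dist a x + G.dist b y) (G.dist a y + G.dist b x) + G.dist c e := by
  wlog hxy : G.dist a (hmed.median a b x) ≤ G.dist a (hmed.median a b y) generalizing x y
  · obtain ⟨c, hc, e, he, hce, h⟩ := this y x (by omega)
    rw [G.dist_comm (u := y), max_comm] at h
    exact ⟨c, hc, e, he, hce, h⟩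
  obtain ⟨⟨hxab, hxa⟩, hxb⟩ := hmed.median_mem a b x
  obtain ⟨⟨hyab, hya⟩, -⟩ := hmed.median_mem a b y
  set px := hmed.median a b x
  set py := hmed.median a b y
  obtain ⟨c, hc, hpxc⟩ := hG.exists_mem_gInterval_dist_eq (u := px) (v := b)
    (t := G.dist a py - G.dist a px) (by rw [mem_gInterval] at hxab hyab; omega)
  have hcab : c ∈ gInterval G a b :=
    hG.gInterval_subset (mem_gInterval_comm.mp hxab) (mem_gInterval_comm.mp hc)
    |> mem_gInterval_comm.mp
  have hapx : px ∈ gInterval G a c :=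
    hG.mem_gInterval_of_mem_gInterval (mem_gInterval_comm.mp hxab) (mem_gInterval_comm.mp hc)
    |> mem_gInterval_comm.mp
  refine ⟨c, hcab, py, hyab, ?_, ?_⟩
  · rw [mem_gInterval] at hapx
    omega
  · rw [mem_gInterval] at *
    have := hG.dist_triangle (u := x) (v := px) (w := y)
    have := hG.dist_triangle (u := px) (v := c) (w := y)
    have := hG.dist_triangle (u := c) (v := py) (w := y)
    have := G.dist_comm (u := b) (v := px)
    have := G.dist_comm (u := x) (v := px)
    omega

theorem isHyperbolic_of_forall_not_isIsometricGrid (hmed : MedianGraph G) (hG : G.Connected)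
    {N : ℕ} (hN : ∀ g, ¬ IsIsometricGrid G N g) : IsHyperbolic G N := by
  intro u v x y
  obtain ⟨c, hc, e, he, hce, h⟩ := hmed.exists_four_point_le hG u v x y
  have hthin := hmed.dist_lt_of_forall_not_isIsometricGrid hG hN hc he hce
  have : G.dist u v + G.dist x y ≤
      max (G.dist u x + G.dist v y) (G.dist u y + G.dist v x) + 2 * N := by omega
  exact_mod_cast this

end MedianGraph

section Dismantling

variable {G : SimpleGraph V}

lemma mem_gBallRemove_of_walk {u v x : V} (p : G.Walk v x) (hu : u ∉ p.support) {r : ℝ}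
    (hr : (p.length : ℝ) ≤ r) : x ∈ gBallRemove G u v r := by
  have hp : ∀ w ∈ p.support, w ∈ {w : V | w ≠ u} := fun w hw h => hu (h ▸ hw)
  have hlen : (p.induce _ hp).length = p.length := by
    have := congrArg Walk.length (p.map_induce hp)
    rwa [Walk.length_map] at this
  refine ⟨_, _, (p.induce _ hp).reachable, le_trans ?_ hr⟩
  exact_mod_cast hlen ▸ dist_le (p.induce _ hp)

-- A geodesic from `v` to `x` either avoids `u` or passes through it.
lemma dist_lt_of_gBallRemove_inter_subset (hG : G.Connected) {u v x : V} {s : ℕ} {X : Set V}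
    (huv : u ≠ v) (hsub : gBallRemove G u v s ∩ X ⊆ gBall G u (s - 1)) (hx : x ∈ X)
    (hvx : G.dist v x ≤ s) : G.dist u x < s := by
  obtain ⟨p, hp⟩ := hG.exists_walk_length_eq_dist v x
  by_cases hu : u ∈ p.support
  · have hsplit := p.mem_gInterval_of_mem_support hp hu
    have hvu := hG.pos_dist_of_ne huv.symm
    rw [mem_gInterval] at hsplit
    omega
  · have hball : (G.dist u x : ℝ) ≤ s - 1 :=
      hsub ⟨mem_gBallRemove_of_walk p hu (by exact_mod_cast hp ▸ hvx), hx⟩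
    have : (G.dist u x : ℝ) < s := by linarith
    exact_mod_cast this

lemma exists_le_natDist_eq {s i : ℕ} (hi : i ≤ 2 * s) :
    ∃ i' ≤ 2 * s, Nat.dist i i' = s := by
  by_cases h : i ≤ s
  · exact ⟨i + s, by omega, by simp only [Nat.dist]; omega⟩
  · exact ⟨i - s, by omega, by simp only [Nat.dist]; omega⟩

theorem Dismantlable.not_isIsometricGrid (hG : G.Connected) {s : ℕ}
    (hs : 1 ≤ s) (hd : Dismantlable G s (s - 1)) (g : ℕ → ℕ → V) :
    ¬ IsIsometricGrid G (2 * s) g := by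
  intro hg
  obtain ⟨lt, hwo, helim⟩ := hd
  let := IsWellOrder.linearOrder lt
  obtain ⟨⟨i₀, j₀⟩, hij₀, hmax⟩ :=
    (Finset.range (2 * s + 1) ×ˢ Finset.range (2 * s + 1)).exists_max_image
      (fun ij => g ij.1 ij.2) ⟨(0, 0), by simp⟩
  simp only [Finset.mem_product, Finset.mem_range, Prod.forall] at hij₀ hmax
  obtain ⟨i₁, hi₁, hii⟩ := exists_le_natDist_eq (s := s) (i := i₀) (by omega)
  obtain ⟨j₁, hj₁, hjj⟩ := exists_le_natDist_eq (s := s) (i := j₀) (by omega)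
  have hzp := hg i₀ j₀ i₁ j₀ (by omega) (by omega) hi₁ (by omega)
  have hzq := hg i₀ j₀ i₀ j₁ (by omega) (by omega) (by omega) hj₁
  have hpq := hg i₁ j₀ i₀ j₁ hi₁ (by omega) (by omega) hj₁
  rw [Nat.dist_self, hii, add_zero] at hzp
  rw [Nat.dist_self, hjj, zero_add] at hzq
  rw [Nat.dist_comm, hii, hjj] at hpq
  have hX (i j : ℕ) (hi : i ≤ 2 * s) (hj : j ≤ 2 * s) :
      g i j ∈ {w : V | lt w (g i₀ j₀) ∨ w = g i₀ j₀} :=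
    (hmax i j ⟨by omega, by omega⟩).lt_or_eq
  have hpz : lt (g i₁ j₀) (g i₀ j₀) := (hX i₁ j₀ hi₁ (by omega)).resolve_right
    fun h => by rw [h, SimpleGraph.dist_self] at hzp; omega
  obtain ⟨w, hwz, hsub⟩ := helim (g i₀ j₀) ⟨_, hpz⟩
  have hw : w ≠ g i₀ j₀ := ne_of_lt hwz
  have hwp := dist_lt_of_gBallRemove_inter_subset hG hw hsub (hX i₁ j₀ hi₁ (by omega)) hzp.le
  have hwq := dist_lt_of_gBallRemove_inter_subset hG hw hsub (hX i₀ j₁ (by omega) hj₁) hzq.le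
  have := hG.dist_triangle (u := g i₁ j₀) (v := w) (w := g i₀ j₁)
  have := G.dist_comm (u := g i₁ j₀) (v := w)
  omega

end Dismantling

theorem statement14 (V : Type*) (G : SimpleGraph V) (hG : G.Connected)
    (hmed : MedianGraph G)
    (s : ℕ) (hs : 1 ≤ s)
    (hd : Dismantlable G (s : ℝ) ((s : ℝ) - 1)) :
    IsHyperbolic G (2 * (s : ℝ)) := by
  exact_mod_cast hmed.isHyperbolic_of_forall_not_isIsometricGrid hG (hd.not_isIsometricGrid hG hs)
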